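/- Let G be a group of type FP with cd(G) < ∞, c ∈ Z(G) a nontrivial central element with ⟨c⟩ infinite cyclic, and Γ = G/⟨c⟩ of type VFP. Then χ(G) = 0, and consequently for any finite length finite type free resolution F• → ℤ over ℤG, the sum of the ranks of the even-indexed F_i equals the sum of the ranks of the odd-indexed F_i. -/

import Mathlib

open CategoryTheory CategoryTheory.Limits

/-- The augmentation ring homomorphism `ℤH → ℤ`. -/
noncomputable def aug (H : Type) [Group H] : MonoidAlgebra ℤ H →+* ℤ :=
  ((MonoidAlgebra.lift ℤ ℤ H) 1).toRingHom

/-- A group `H` is of type `FP` if the trivial module `ℤ` admits a finite-length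
projective resolution over `ℤH` by finitely generated projective modules. -/
noncomputable def typeFP (H : Type) [Group H] : Prop :=
  ∃ (n : ℕ) (P : CategoryTheory.ProjectiveResolution
      ((ModuleCat.restrictScalars (aug H)).obj (ModuleCat.of ℤ ℤ))),
    (∀ i, Module.Finite (MonoidAlgebra ℤ H) (P.complex.X i)) ∧
    (∀ i, n < i → IsZero (P.complex.X i))

/-! Multiplication by `z = c - 1`, for `c` central, is a chain endomorphism of the resolution that
induces zero on `ℤ` (as `aug z = 0`), hence is null-homotopic: `z = d h + h d` in each degree.
The coefficient of `c` is a trace functional on `ℤG` because `c` is central. For the associated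
Hattori–Stallings trace, `z` on `ℤG^(r i)` has trace `r i` (the coefficient of `c` in `c - 1` is
`1` as `c ≠ 1`), while `d h + h d` has trace `t i + t (i - 1)` with `t i = tr (h d)`. So the
alternating sum of the ranks telescopes to `± t n`, which vanishes because `r (n + 1) = 0`. -/

open Finset LinearMap

section HattoriStallings

variable {R A : Type*} [Ring R] [AddCommGroup A]

theorem LinearMap.exists_comp_eq_of_range_le {P M N : Type*} [AddCommGroup P] [Module R P]
    [Module.Projective R P] [AddCommGroup M] [Module R M] [AddCommGroup N] [Module R N]
    (d : M →ₗ[R] N) (u : P →ₗ[R] N) (hu : range u ≤ range d) :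
    ∃ h : P →ₗ[R] M, d ∘ₗ h = u := by
  obtain ⟨h, hh⟩ := Module.projective_lifting_property d.rangeRestrict
    (u.codRestrict _ fun p => hu ⟨p, rfl⟩) d.surjective_rangeRestrict
  exact ⟨h, LinearMap.ext fun p => congr(($hh p : N))⟩

theorem LinearMap.pi_apply_eq_sum_mul_single {ι κ : Type*} [Fintype κ] [DecidableEq κ]
    (f : (κ → R) →ₗ[R] (ι → R)) (v : κ → R) (i : ι) :
    f v i = ∑ j, v j * f (Pi.single j 1) i := by
  conv_lhs => rw [← Finset.univ_sum_single v, map_sum, Finset.sum_apply]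
  refine sum_congr rfl fun j _ => ?_
  rw [← smul_eq_mul, ← Pi.smul_apply, ← map_smul, ← Pi.single_smul', smul_eq_mul, mul_one]

variable (T : R →+ A)

section Trace

variable {ι κ : Type*} [Fintype ι] [DecidableEq ι] [Fintype κ] [DecidableEq κ]

noncomputable def hattoriStallingsTrace : Module.End R (ι → R) →+ A where
  toFun f := ∑ i, T (f (Pi.single i 1) i)
  map_zero' := by simp
  map_add' f g := by simp [sum_add_distrib]

theorem hattoriStallingsTrace_apply (f : Module.End R (ι → R)) :
    hattoriStallingsTrace T f = ∑ i, T (f (Pi.single i 1) i) := rfl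

theorem hattoriStallingsTrace_comp_comm (hT : ∀ a b, T (a * b) = T (b * a))
    (f : (κ → R) →ₗ[R] (ι → R)) (g : (ι → R) →ₗ[R] (κ → R)) :
    hattoriStallingsTrace T (f ∘ₗ g) = hattoriStallingsTrace T (g ∘ₗ f) := by
  simp only [hattoriStallingsTrace_apply, LinearMap.comp_apply]
  simp only [pi_apply_eq_sum_mul_single f (g _), pi_apply_eq_sum_mul_single g (f _), map_sum]
  rw [sum_comm]
  exact sum_congr rfl fun j _ => sum_congr rfl fun i _ => hT _ _

theorem hattoriStallingsTrace_smul_id (w : Subring.center R) :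
    hattoriStallingsTrace T (w • LinearMap.id : Module.End R (ι → R)) = Fintype.card ι • T w := by
  simp [hattoriStallingsTrace_apply, Subring.smul_def]

theorem hattoriStallingsTrace_of_isEmpty [IsEmpty ι] (f : Module.End R (ι → R)) :
    hattoriStallingsTrace T f = 0 := by
  simp [hattoriStallingsTrace_apply]

end Trace

theorem alternating_sum_hattoriStallingsTrace_eq_zero (hT : ∀ a b, T (a * b) = T (b * a))
    {ι : ℕ → Type*} [∀ j, Fintype (ι j)] [∀ j, DecidableEq (ι j)]
    (d : ∀ j, (ι (j + 1) → R) →ₗ[R] (ι j → R))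
    (hd : ∀ j, ker (d j) = range (d (j + 1)))
    (φ : ∀ j, Module.End R (ι j → R)) (hφ : ∀ j, d j ∘ₗ φ (j + 1) = φ j ∘ₗ d j)
    (hφ₀ : range (φ 0) ≤ range (d 0)) (n : ℕ) [IsEmpty (ι (n + 1))] :
    ∑ i ∈ range (n + 1), (-1 : ℤ) ^ i • hattoriStallingsTrace T (φ i) = 0 := by
  have hdd : ∀ j, d j ∘ₗ d (j + 1) = 0 := fun j => range_le_ker_iff.mp (hd j).ge
  have homotopy : ∀ j, ∃ h : (ι j → R) →ₗ[R] (ι (j + 1) → R),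
      (φ j - d j ∘ₗ h) ∘ₗ d j = 0 ∧
      ∑ i ∈ range (j + 1), (-1 : ℤ) ^ i • hattoriStallingsTrace T (φ i) =
        (-1 : ℤ) ^ j • hattoriStallingsTrace T (h ∘ₗ d j) := by
    intro j
    induction j with
    | zero =>
      obtain ⟨h, hh⟩ := exists_comp_eq_of_range_le (d 0) (φ 0) hφ₀
      exact ⟨h, by simp [hh], by simp [hattoriStallingsTrace_comp_comm T hT h, hh]⟩
    | succ j ih =>
      obtain ⟨h, hcycle, hsum⟩ := ih
      have hrange : range (φ (j + 1) - h ∘ₗ d j) ≤ range (d (j + 1)) := by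
        rw [← hd, range_le_ker_iff, comp_sub, hφ, ← comp_assoc, ← sub_comp, hcycle]
      obtain ⟨h', hh'⟩ := exists_comp_eq_of_range_le (d (j + 1)) _ hrange
      refine ⟨h', ?_, ?_⟩
      · rw [hh', sub_sub_cancel, comp_assoc, hdd, LinearMap.comp_zero]
      · rw [sum_range_succ, hsum, ← hattoriStallingsTrace_comp_comm T hT (d (j + 1)) h', hh',
          map_sub, smul_sub, pow_succ, mul_neg_one, neg_smul, neg_smul]
        abel
  obtain ⟨h, -, hsum⟩ := homotopy n
  rw [hsum, hattoriStallingsTrace_of_isEmpty, smul_zero]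

end HattoriStallings

theorem Finset.sum_filter_even_eq_sum_filter_not_even {s : Finset ℕ} {f : ℕ → ℕ}
    (h : ∑ i ∈ s, (-1 : ℤ) ^ i * f i = 0) :
    ∑ i ∈ s.filter (fun i => Even i), f i = ∑ i ∈ s.filter (fun i => ¬ Even i), f i := by
  have heven : ∑ i ∈ s.filter Even, (-1 : ℤ) ^ i * f i = ∑ i ∈ s.filter Even, (f i : ℤ) :=
    sum_congr rfl fun i hi => by rw [(mem_filter.1 hi).2.neg_one_pow, one_mul]
  have hodd : ∑ i ∈ s.filter (¬ Even ·), (-1 : ℤ) ^ i * f i =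
      -∑ i ∈ s.filter (¬ Even ·), (f i : ℤ) := by
    rw [← sum_neg_distrib]
    exact sum_congr rfl fun i hi => by
      rw [(Nat.not_even_iff_odd.1 (mem_filter.1 hi).2).neg_one_pow, neg_one_mul]
  rw [← sum_filter_add_sum_filter_not s Even, heven, hodd, add_neg_eq_zero] at h
  exact_mod_cast h

namespace MonoidAlgebra

variable {k G : Type*} [Group G] {c : G}

theorem coeff_mul_comm_of_mem_center [CommSemiring k] (hc : c ∈ Subgroup.center G)
    (a b : MonoidAlgebra k G) : (a * b).coeff c = (b * a).coeff c := by
  rw [coeff_mul_apply_left, coeff_mul_apply_right]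
  refine Finsupp.sum_congr fun x _ => ?_
  rw [mul_comm, Subgroup.mem_center_iff.mp hc x⁻¹]

variable [CommRing k]

theorem single_sub_one_mem_center (hc : c ∈ Subgroup.center G) :
    single c (1 : k) - 1 ∈ Subring.center (MonoidAlgebra k G) := by
  refine Subring.sub_mem _ (Subring.mem_center_iff.mpr fun a => ?_) (Subring.one_mem _)
  exact (single_commute (fun g => (Subgroup.mem_center_iff.mp hc g).symm)
    (fun r => Commute.all _ r) a).eq.symm

theorem coeff_single_sub_one_self (hc : c ≠ 1) : (single c (1 : k) - 1).coeff c = 1 := by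
  simp [coeff_sub, one_def, Finsupp.single_eq_of_ne hc]

end MonoidAlgebra

theorem aug_single_sub_one (G : Type) [Group G] (c : G) :
    aug G (MonoidAlgebra.single c 1 - 1) = 0 := by
  simp [aug, MonoidAlgebra.lift_single]

theorem stmt15_general (G : Type) [Group G]
    (c : G) (hc : c ∈ Subgroup.center G) (hc1 : c ≠ 1)
    (n : ℕ) (r : ℕ → ℕ)
    (dd : ∀ j, (Fin (r (j + 1)) → MonoidAlgebra ℤ G)
      →ₗ[MonoidAlgebra ℤ G] (Fin (r j) → MonoidAlgebra ℤ G))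
    (ε : (Fin (r 0) → MonoidAlgebra ℤ G) →+ ℤ)
    (hεlin : ∀ (a : MonoidAlgebra ℤ G) v, ε (a • v) = aug G a * ε v)
    (hex0 : ∀ v, ε v = 0 ↔ v ∈ LinearMap.range (dd 0))
    (hex : ∀ j, LinearMap.ker (dd j) = LinearMap.range (dd (j + 1)))
    (hlen : ∀ i, n < i → r i = 0) :
    (∑ i ∈ Finset.range (n + 1), (-1 : ℤ) ^ i * (r i : ℤ) = 0) ∧
    (∑ i ∈ (Finset.range (n + 1)).filter (fun i => Even i), r i =
      ∑ i ∈ (Finset.range (n + 1)).filter (fun i => ¬ Even i), r i) := by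
  let w : Subring.center (MonoidAlgebra ℤ G) :=
    ⟨MonoidAlgebra.single c 1 - 1, MonoidAlgebra.single_sub_one_mem_center hc⟩
  let φ (j : ℕ) : Module.End (MonoidAlgebra ℤ G) (Fin (r j) → MonoidAlgebra ℤ G) :=
    w • LinearMap.id
  let T : MonoidAlgebra ℤ G →+ ℤ :=
    (Finsupp.applyAddHom c).comp MonoidAlgebra.coeffAddEquiv.toAddMonoidHom
  have hφ₀ : LinearMap.range (φ 0) ≤ LinearMap.range (dd 0) := by
    rintro _ ⟨v, rfl⟩
    rw [← hex0, LinearMap.smul_apply, Subring.smul_def, LinearMap.id_apply, hεlin,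
      aug_single_sub_one, zero_mul]
  have : IsEmpty (Fin (r (n + 1))) := by rw [hlen (n + 1) n.lt_succ_self]; infer_instance
  have heuler := alternating_sum_hattoriStallingsTrace_eq_zero T
    (MonoidAlgebra.coeff_mul_comm_of_mem_center hc) dd hex φ (fun _ => by ext; simp [φ]) hφ₀ n
  have hsum : ∑ i ∈ Finset.range (n + 1), (-1 : ℤ) ^ i * (r i : ℤ) = 0 := by
    have hTw : T w = 1 := MonoidAlgebra.coeff_single_sub_one_self hc1
    simpa [φ, hattoriStallingsTrace_smul_id, hTw] using heuler
  exact ⟨hsum, sum_filter_even_eq_sum_filter_not_even hsum⟩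

/-- Let `G` be a group of type `FP` with `cd(G) < ∞`, `c ∈ Z(G)` a
nontrivial central element with `⟨c⟩` infinite cyclic, and `Γ = G/⟨c⟩` of type `VFP`
(every torsion-free finite-index subgroup of `Γ` is of type `FP`).  Then `χ(G) = 0`,
and consequently for any finite-length finite-type free resolution `F• → ℤ` over
`ℤG` (with `F_j` free of rank `r j`), the sum of the ranks of the even-indexed `F_i`
equals the sum of the ranks of the odd-indexed `F_i`. -/
theorem stmt15 (G : Type) [Group G] (hG : typeFP G)
    (c : G) (hc : c ∈ Subgroup.center G) (hc1 : c ≠ 1) (hcinf : ¬ IsOfFinOrder c)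
    [hnorm : (Subgroup.zpowers c).Normal]
    (hVFP : ∀ H : Subgroup (G ⧸ Subgroup.zpowers c), H.FiniteIndex →
      (∀ g : H, g ≠ 1 → ¬IsOfFinOrder g) → typeFP H)
    (n : ℕ) (r : ℕ → ℕ)
    (dd : ∀ j, (Fin (r (j + 1)) → MonoidAlgebra ℤ G)
      →ₗ[MonoidAlgebra ℤ G] (Fin (r j) → MonoidAlgebra ℤ G))
    (ε : (Fin (r 0) → MonoidAlgebra ℤ G) →+ ℤ)
    (hεlin : ∀ (a : MonoidAlgebra ℤ G) v, ε (a • v) = aug G a * ε v)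
    (hεsurj : Function.Surjective ε)
    (hex0 : ∀ v, ε v = 0 ↔ v ∈ LinearMap.range (dd 0))
    (hex : ∀ j, LinearMap.ker (dd j) = LinearMap.range (dd (j + 1)))
    (hlen : ∀ i, n < i → r i = 0) :
    (∑ i ∈ Finset.range (n + 1), (-1 : ℤ) ^ i * (r i : ℤ) = 0) ∧
    (∑ i ∈ (Finset.range (n + 1)).filter (fun i => Even i), r i =
      ∑ i ∈ (Finset.range (n + 1)).filter (fun i => ¬ Even i), r i) :=
  stmt15_general G c hc hc1 n r dd ε hεlin hex0 hex hlen
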